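/- arXiv:0709.4310 — 4 statements merged into one kernel-verified Lean document; each statement's English description precedes it below -/
import Mathlib

section
/- Let H be a separable Hilbert space and D a self-adjoint operator with trivial kernel whose inverse h = D⁻¹ is compact. Then the set {h·y·h : y ∈ B(H), y = y*} is norm dense in the space of self-adjoint compact operators on H. -/
/-!
Let `C` be the norm closure of `h B(H)_sa h`; it is a closed real subspace of `B(H)`.
Since `h (v ⊗ v*) h = (h v) ⊗ (h v)*` and the range of the injective self-adjoint `h` is dense,
`C` contains every `a ⊗ a*`, hence by polarization every `x ⊗ y* + y ⊗ x*`, hence `T + T*` for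
every finite-rank `T`. Orthogonal projections `P` onto finite-dimensional subspaces are
uniformly bounded and converge strongly to the identity; the convergence is uniform on the
relatively compact image of the unit ball under a compact `k`, so `P k → k` in norm and a
self-adjoint compact `k` is the limit of `(P k + (P k)*) / 2 ∈ C`.
-/

open Filter Topology ContinuousLinearMap InnerProductSpace Submodule

theorem IsCompactOperator.tendsto_comp {ι 𝕜 E F G : Type*} [NontriviallyNormedField 𝕜]
    [NormedAlgebra ℝ 𝕜] [NormedAddCommGroup E] [NormedSpace 𝕜 E] [NormedAddCommGroup F]
    [NormedSpace 𝕜 F] [NormedAddCommGroup G] [NormedSpace 𝕜 G]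
    {k : E →L[𝕜] F} (hk : IsCompactOperator k) {l : Filter ι} {P : ι → F →L[𝕜] G}
    {Q : F →L[𝕜] G} (hP : ∃ C, ∀ i, ‖P i‖ ≤ C) (hPQ : ∀ y, Tendsto (fun i ↦ P i y) l (𝓝 (Q y))) :
    Tendsto (fun i ↦ P i ∘L k) l (𝓝 (Q ∘L k)) := by
  set K := closure (k '' Metric.closedBall 0 1)
  have : CompactSpace K := isCompact_iff_compactSpace.mp (hk.isCompact_closure_image_closedBall 1)
  have hequi : Equicontinuous (K.domRestrict ∘ fun i ↦ ⇑(P i)) :=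
    (equicontinuous_restrict_iff _).mpr <|
      Equicontinuous.equicontinuousOn (((NormedSpace.equicontinuous_TFAE P).out 1 5).mpr hP) K
  have hunif := Metric.tendstoUniformly_iff.mp <| UniformFun.tendsto_iff_tendstoUniformly.mp <|
    (hequi.tendsto_uniformFun_iff_pi l (K.domRestrict Q)).mpr (tendsto_pi_nhds.mpr fun z ↦ hPQ z)
  refine Metric.tendsto_nhds.mpr fun ε hε ↦ ?_
  filter_upwards [hunif (ε / 2) (half_pos hε)] with i hi
  rw [dist_eq_norm]
  refine (opNorm_le_of_unit_norm (half_pos hε).le fun x hx ↦ ?_).trans_lt (half_lt_self hε)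
  rw [sub_apply, comp_apply, comp_apply, ← dist_eq_norm']
  exact (hi ⟨k x, subset_closure (Set.mem_image_of_mem k (by simp [hx]))⟩).le

section RCLike

variable {𝕜 E : Type*} [RCLike 𝕜] [NormedAddCommGroup E] [InnerProductSpace 𝕜 E]

theorem IsSelfAdjoint.denseRange_of_injective [CompleteSpace E] {T : E →L[𝕜] E}
    (hT : IsSelfAdjoint T) (hinj : Function.Injective T) : DenseRange T := by
  change Dense (T.range : Set E)
  rw [dense_iff_topologicalClosure_eq_top, topologicalClosure_eq_top_iff, orthogonal_range,
    ← star_eq_adjoint, hT.star_eq]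
  exact LinearMap.ker_eq_bot.mpr hinj

theorem tendsto_starProjection_span_finset (x : E) :
    Tendsto (fun s : Finset E ↦ (span 𝕜 (s : Set E)).starProjection x) atTop (𝓝 x) := by
  refine tendsto_const_nhds.congr' ?_
  filter_upwards [eventually_ge_atTop {x}] with s hs
  exact (starProjection_eq_self_iff.mpr (subset_span (by simpa using hs))).symm

end RCLike

section Complex

variable {E : Type*} [NormedAddCommGroup E] [InnerProductSpace ℂ E]

theorem two_smul_rankOne_add_rankOne (x y : E) :
    (2 : ℝ) • (rankOne ℂ x y + rankOne ℂ y x) =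
      rankOne ℂ (x + y) (x + y) - rankOne ℂ (x - y) (x - y) := by
  simp only [map_add, map_sub, add_apply, sub_apply]
  module

theorem rankOne_add_rankOne_mem {C : Submodule ℝ (E →L[ℂ] E)} (hC : ∀ a, rankOne ℂ a a ∈ C)
    (x y : E) : rankOne ℂ x y + rankOne ℂ y x ∈ C := by
  rw [← C.smul_mem_iff (two_ne_zero (α := ℝ)), two_smul_rankOne_add_rankOne]
  exact C.sub_mem (hC _) (hC _)

variable [CompleteSpace E]

theorem starProjection_comp_add_star_mem {C : Submodule ℝ (E →L[ℂ] E)}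
    (hC : ∀ a, rankOne ℂ a a ∈ C) (U : Submodule ℂ E) [FiniteDimensional ℂ U] (k : E →L[ℂ] E) :
    U.starProjection ∘L k + star (U.starProjection ∘L k) ∈ C := by
  simp only [star_eq_adjoint, (stdOrthonormalBasis ℂ U).starProjection_eq_sum_rankOne,
    finsetSum_comp, rankOne_comp, map_sum, adjoint_rankOne, ← Finset.sum_add_distrib]
  exact C.sum_mem fun i _ ↦ rankOne_add_rankOne_mem hC _ _

theorem IsCompactOperator.mem_of_isSelfAdjoint_of_rankOne_self_mem
    {C : Submodule ℝ (E →L[ℂ] E)} (hC : ∀ a, rankOne ℂ a a ∈ C)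
    (hC_closed : IsClosed (C : Set (E →L[ℂ] E))) {k : E →L[ℂ] E} (hk : IsCompactOperator k)
    (hk_sa : IsSelfAdjoint k) : k ∈ C := by
  have hP : Tendsto (fun s : Finset E ↦ (span ℂ (s : Set E)).starProjection ∘L k) atTop (𝓝 k) := by
    simpa using hk.tendsto_comp ⟨1, fun s ↦ starProjection_norm_le _⟩
      (Q := .id ℂ E) tendsto_starProjection_span_finset
  have hsum := hP.add hP.star
  rw [hk_sa.star_eq] at hsum
  have : k + k ∈ C := hC_closed.mem_of_tendsto hsum
    (Eventually.of_forall fun s ↦ starProjection_comp_add_star_mem hC _ k)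
  rwa [← two_smul ℝ, C.smul_mem_iff two_ne_zero] at this

def sandwich (h : E →L[ℂ] E) : Submodule ℝ (E →L[ℂ] E) where
  carrier := {T | ∃ y : E →L[ℂ] E, IsSelfAdjoint y ∧ T = h ∘L y ∘L h}
  zero_mem' := ⟨0, .zero _, by simp⟩
  add_mem' := by
    rintro _ _ ⟨y, hy, rfl⟩ ⟨z, hz, rfl⟩
    exact ⟨y + z, hy.add hz, by simp [add_comp, comp_add]⟩
  smul_mem' := by
    rintro c _ ⟨y, hy, rfl⟩
    exact ⟨c • y, (IsSelfAdjoint.all c).smul hy, by ext; simp⟩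

theorem rankOne_self_mem_topologicalClosure_sandwich {h : E →L[ℂ] E} (hsa : IsSelfAdjoint h)
    (hinj : Function.Injective h) (a : E) : rankOne ℂ a a ∈ (sandwich h).topologicalClosure := by
  have hmem : ∀ v, rankOne ℂ (h v) (h v) ∈ sandwich h := fun v ↦
    ⟨rankOne ℂ v v, (isPositive_rankOne_self v).isSelfAdjoint, by
      rw [rankOne_comp, comp_rankOne, ← star_eq_adjoint, hsa.star_eq]⟩
  have hcont : Continuous fun b : E ↦ rankOne ℂ b b := by simp only [rankOne_def]; fun_prop
  exact (hsa.denseRange_of_injective hinj).induction_on a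
    ((sandwich h).isClosed_topologicalClosure.preimage hcont)
    fun v ↦ (sandwich h).le_topologicalClosure (hmem v)

end Complex

theorem stmt_7_general {H : Type*} [NormedAddCommGroup H] [InnerProductSpace ℂ H]
    [CompleteSpace H]
    (h : H →L[ℂ] H) (hsa : IsSelfAdjoint h)
    (hinj : Function.Injective h) :
    ∀ k : H →L[ℂ] H, IsCompactOperator k → IsSelfAdjoint k →
      k ∈ closure {T : H →L[ℂ] H |
        ∃ y : H →L[ℂ] H, IsSelfAdjoint y ∧ T = h ∘L y ∘L h} :=
  fun _ hk hk_sa ↦ hk.mem_of_isSelfAdjoint_of_rankOne_self_mem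
    (rankOne_self_mem_topologicalClosure_sandwich hsa hinj)
    (sandwich h).isClosed_topologicalClosure hk_sa

/-- If h = D⁻¹ is a compact self-adjoint injective operator on a separable Hilbert space,
then {h·y·h : y bounded self-adjoint} is norm dense in the self-adjoint compact operators. -/
theorem stmt_7 {H : Type*} [NormedAddCommGroup H] [InnerProductSpace ℂ H]
    [CompleteSpace H] [SecondCountableTopology H]
    (h : H →L[ℂ] H) (hcomp : IsCompactOperator h) (hsa : IsSelfAdjoint h)
    (hinj : Function.Injective h) :
    ∀ k : H →L[ℂ] H, IsCompactOperator k → IsSelfAdjoint k →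
      k ∈ closure {T : H →L[ℂ] H |
        ∃ y : H →L[ℂ] H, IsSelfAdjoint y ∧ T = h ∘L y ∘L h} :=
  stmt_7_general h hsa hinj
end

section
/- Let H be a Hilbert space, D a self-adjoint operator with compact inverse h = D⁻¹, and let U° = {k compact self-adjoint on H : Dk is bounded with ‖Dk‖ ≤ 1 and kD bounded}. Then for every ε > 0 there is a finite-rank spectral projection E of h with ‖h(I−E)‖ < ε such that for all k ∈ U°: ‖k(I−E)‖ ≤ ε and ‖(I−E)k‖ ≤ ε. Consequently U° is totally bounded, hence relatively norm compact, in the space of compact operators. -/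
/-!
Let `W` be the span of the eigenspaces of `h` for eigenvalues of modulus at least `ε`. Since `h` is
bounded below by `ε` on `W` and compact, `W` is finite-dimensional; it reduces `h`, so its
orthogonal projection `E` commutes with `h`. A nonzero eigenvector of the compact self-adjoint
operator `h(1 - E)` is killed by `E`, hence is an eigenvector of `h` outside `W`, so its eigenvalue
has modulus `< ε`; as the norm of a compact self-adjoint operator is the modulus of one of its
eigenvalues, `‖h(1 - E)‖ < ε`. For `k = hb ∈ U` this gives `‖(1 - E)k‖ = ‖h(1 - E)b‖ ≤ ε`, and
`k(1 - E)` is the adjoint of `(1 - E)k`. Hence every `k ∈ U` is `2ε`-close to `EkE`, which ranges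
over a bounded subset of the finite-dimensional space `E B(H) E`, and `U` is totally bounded.
-/

open Module End Metric

theorem Metric.totallyBounded_of_forall_subset_thickening {α : Type*} [PseudoMetricSpace α]
    {s : Set α} (h : ∀ δ > 0, ∃ t, TotallyBounded t ∧ s ⊆ thickening δ t) :
    TotallyBounded s := by
  rw [totallyBounded_iff]
  intro ε hε
  obtain ⟨t, ht, hst⟩ := h (ε / 2) (by positivity)
  obtain ⟨u, hu, htu⟩ := totallyBounded_iff.mp ht (ε / 2) (by positivity)
  refine ⟨u, hu, fun x hx => ?_⟩
  obtain ⟨y, hy, hxy⟩ := mem_thickening_iff.mp (hst hx)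
  obtain ⟨z, hz, hyz⟩ := Set.mem_iUnion₂.mp (htu hy)
  refine Set.mem_iUnion₂.mpr ⟨z, hz, ?_⟩
  rw [mem_ball] at hyz ⊢
  linarith [dist_triangle x y z]

section NormedRing

variable {A : Type*} [NormedRing A]

theorem norm_sub_mul_mul_le {k p : A} (hp : ‖p‖ ≤ 1) :
    ‖k - p * k * p‖ ≤ ‖k * (1 - p)‖ + ‖(1 - p) * k‖ :=
  calc ‖k - p * k * p‖ = ‖k * (1 - p) + (1 - p) * k * p‖ := by noncomm_ring
    _ ≤ ‖k * (1 - p)‖ + ‖(1 - p) * k * p‖ := norm_add_le _ _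
    _ ≤ ‖k * (1 - p)‖ + ‖(1 - p) * k‖ * ‖p‖ := by gcongr; exact norm_mul_le _ _
    _ ≤ ‖k * (1 - p)‖ + ‖(1 - p) * k‖ := by gcongr; exact mul_le_of_le_one_right (norm_nonneg _) hp

theorem IsSelfAdjoint.norm_mul_le_of_commute [StarRing A] [NormedStarGroup A] {h p k b : A}
    (hp : IsSelfAdjoint p) (hk : IsSelfAdjoint k) (hhp : Commute h p) (hkb : k = h * b)
    (hb : ‖b‖ ≤ 1) : ‖k * p‖ ≤ ‖h * p‖ ∧ ‖p * k‖ ≤ ‖h * p‖ := by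
  have hpk : ‖p * k‖ ≤ ‖h * p‖ :=
    calc ‖p * k‖ = ‖h * p * b‖ := by rw [hkb, ← mul_assoc, hhp.eq]
      _ ≤ ‖h * p‖ * ‖b‖ := norm_mul_le _ _
      _ ≤ ‖h * p‖ := mul_le_of_le_one_right (norm_nonneg _) hb
  refine ⟨?_, hpk⟩
  rwa [← norm_star, star_mul, hp.star_eq, hk.star_eq]

end NormedRing

theorem IsCompactOperator.finiteDimensional_of_mul_norm_le {𝕜 E F : Type*}
    [NontriviallyNormedField 𝕜] [CompleteSpace 𝕜] [NormedAddCommGroup E] [NormedSpace 𝕜 E]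
    [NormedAddCommGroup F] [NormedSpace 𝕜 F] {T : E →L[𝕜] F} (hT : IsCompactOperator T)
    {c : ℝ} (hc : 0 < c) (hTc : ∀ x, c * ‖x‖ ≤ ‖T x‖) : FiniteDimensional 𝕜 E := by
  obtain ⟨K, hK⟩ := antilipschitzWith_iff_exists_mul_le_norm.mpr ⟨c, hc, hTc⟩
  refine .of_totallyBounded_nhds_zero 𝕜 (closedBall_mem_nhds 0 one_pos) ?_
  have himage : TotallyBounded (T '' closedBall 0 1) :=
    (hT.isCompact_closure_image_closedBall 1).totallyBounded.subset subset_closure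
  exact (totallyBounded_preimage (hK.isUniformEmbedding T.uniformContinuous).isUniformInducing
    himage).subset (Set.subset_preimage_image _ _)

namespace Module.End

variable {𝕜 M : Type*} [NormedField 𝕜] [AddCommGroup M] [Module 𝕜 M]

/-- For compact self-adjoint `T` this is the range of the spectral projection `𝟙_{[c, ∞)}(|T|)`. -/
def spectralSubspace (T : End 𝕜 M) (c : ℝ) : Submodule 𝕜 M :=
  ⨆ μ : {μ : 𝕜 // c ≤ ‖μ‖}, eigenspace T μ

theorem spectralSubspace_mem_invtSubmodule (T : End 𝕜 M) (c : ℝ) :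
    spectralSubspace T c ∈ T.invtSubmodule :=
  (mem_invtSubmodule T).mpr <| iSup_le fun μ _ hx =>
    le_iSup (fun μ : {μ : 𝕜 // c ≤ ‖μ‖} => eigenspace T μ) μ (eigenspace_mem_invtSubmodule T μ hx)

end Module.End

section InnerProductSpace

variable {𝕜 E : Type*} [RCLike 𝕜] [NormedAddCommGroup E] [InnerProductSpace 𝕜 E]

theorem LinearMap.IsSymmetric.mul_norm_le_norm_apply_of_mem_spectralSubspace {T : E →ₗ[𝕜] E}
    (hT : T.IsSymmetric) {c : ℝ} (hc : 0 ≤ c) {x : E} (hx : x ∈ spectralSubspace T c) :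
    c * ‖x‖ ≤ ‖T x‖ := by
  classical
  obtain ⟨f, rfl⟩ := (Submodule.mem_iSup_iff_exists_dfinsupp' _ x).mp hx
  have hortho := hT.orthogonalFamily_eigenspaces.comp
    (Subtype.coe_injective (p := fun μ : 𝕜 => c ≤ ‖μ‖))
  let g : ∀ μ : {μ : 𝕜 // c ≤ ‖μ‖}, eigenspace T μ := fun μ => (μ : 𝕜) • f μ
  have hTf : T (f.sum fun _ v => (v : E)) = ∑ μ ∈ f.support, (g μ : E) := by
    rw [DFinsupp.sum, map_sum]
    exact Finset.sum_congr rfl fun μ _ => mem_eigenspace_iff.mp (f μ).2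
  have hpythagoras (l : ∀ μ : {μ : 𝕜 // c ≤ ‖μ‖}, eigenspace T μ) :
      ‖∑ μ ∈ f.support, (l μ : E)‖ ^ 2 = ∑ μ ∈ f.support, ‖l μ‖ ^ 2 :=
    hortho.norm_sum l _
  rw [hTf, ← pow_le_pow_iff_left₀ (by positivity) (norm_nonneg _) two_ne_zero, mul_pow,
    DFinsupp.sum, hpythagoras, hpythagoras, Finset.mul_sum]
  gcongr with μ
  simp only [g, norm_smul, mul_pow]
  gcongr
  exact μ.2

theorem Submodule.totallyBounded_image_starProjection_mul_mul (W : Submodule 𝕜 E)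
    [FiniteDimensional 𝕜 W] (R : ℝ) :
    TotallyBounded ((fun a => W.starProjection * a * W.starProjection) '' closedBall 0 R) := by
  set Q := W.orthogonalProjectionOnto
  have := FiniteDimensional.proper_rclike 𝕜 (W →L[𝕜] W)
  have hcompact : IsCompact ((fun c : W →L[𝕜] W => W.subtypeL ∘L c ∘L Q) '' closedBall 0 R) :=
    (isCompact_closedBall 0 R).image (by fun_prop)
  refine hcompact.totallyBounded.subset ?_
  rintro _ ⟨a, ha, rfl⟩
  refine ⟨Q ∘L a ∘L W.subtypeL, ?_, rfl⟩
  rw [mem_closedBall_zero_iff] at ha ⊢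
  calc ‖Q ∘L a ∘L W.subtypeL‖ ≤ ‖Q‖ * (‖a‖ * ‖W.subtypeL‖) :=
        (Q.opNorm_comp_le _).trans (by gcongr; exact a.opNorm_comp_le _)
    _ ≤ ‖a‖ := mul_le_of_le_one_left (by positivity) W.orthogonalProjectionOnto_norm_le |>.trans
        (mul_le_of_le_one_right (norm_nonneg a) W.norm_subtypeL_le)
    _ ≤ R := ha

variable [CompleteSpace E] {T : E →L[𝕜] E}

theorem IsCompactOperator.finiteDimensional_spectralSubspace (hT : IsCompactOperator T)
    (hT' : IsSelfAdjoint T) {c : ℝ} (hc : 0 < c) :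
    FiniteDimensional 𝕜 (spectralSubspace (T : End 𝕜 E) c) :=
  (hT.comp_clm (spectralSubspace (T : End 𝕜 E) c).subtypeL).finiteDimensional_of_mul_norm_le
    (T := T ∘L _) hc fun x =>
      hT'.isSymmetric.mul_norm_le_norm_apply_of_mem_spectralSubspace hc.le x.2

theorem IsSelfAdjoint.commute_starProjection (hT : IsSelfAdjoint T) {W : Submodule 𝕜 E}
    [W.HasOrthogonalProjection] (hW : W ∈ invtSubmodule (T : End 𝕜 E)) :
    Commute T W.starProjection := by
  have hWperp : Wᗮ ∈ invtSubmodule (T : End 𝕜 E) :=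
    ContinuousLinearMap.orthogonal_mem_invtSubmodule (by rwa [hT.adjoint_eq])
  refine (ContinuousLinearMap.IsIdempotentElem.commute_iff W.isIdempotentElem_starProjection
    |>.mpr ?_).symm
  rw [Submodule.range_starProjection, Submodule.ker_starProjection]
  exact ⟨hW, hWperp⟩

theorem IsCompactOperator.norm_lt_of_forall_hasEigenvalue (hT : IsCompactOperator T)
    (hT' : IsSelfAdjoint T) {c : ℝ} (hc : 0 < c)
    (h : ∀ μ, HasEigenvalue (T : End 𝕜 E) μ → ‖μ‖ < c) : ‖T‖ < c := by
  have hσ : ∀ μ ∈ spectrum 𝕜 T, ‖μ‖₊ < c.toNNReal := by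
    intro μ hμ
    rw [← NNReal.coe_lt_coe, coe_nnnorm, Real.coe_toNNReal _ hc.le]
    rcases eq_or_ne μ 0 with rfl | hμ0
    · simpa using hc
    · exact h μ ((hT.hasEigenvalue_iff_mem_spectrum hμ0).mpr hμ)
  have hrad : spectralRadius 𝕜 T < c.toNNReal := by
    rcases (spectrum 𝕜 T).eq_empty_or_nonempty with hempty | hne
    · simpa [spectralRadius, hempty] using hc
    · exact spectrum.spectralRadius_lt_of_forall_lt_of_nonempty hne hσ
  rwa [T.spectralRadius_eq_nnnorm hT', ENNReal.coe_lt_coe, ← NNReal.coe_lt_coe, coe_nnnorm,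
    Real.coe_toNNReal _ hc.le] at hrad

theorem IsCompactOperator.norm_comp_one_sub_starProjection_lt (hT : IsCompactOperator T)
    (hT' : IsSelfAdjoint T) {c : ℝ} (hc : 0 < c) {W : Submodule 𝕜 E} [W.HasOrthogonalProjection]
    (hW : W ∈ invtSubmodule (T : End 𝕜 E)) (hTW : spectralSubspace (T : End 𝕜 E) c ≤ W) :
    ‖T ∘L (1 - W.starProjection)‖ < c := by
  set P := W.starProjection
  have hTP : Commute T P := hT'.commute_starProjection hW
  have hS : IsSelfAdjoint (T * (1 - P)) :=
    (hT'.commute_iff ((IsSelfAdjoint.one _).sub (isSelfAdjoint_starProjection W))).mp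
      ((Commute.one_right T).sub_right hTP)
  refine (hT.comp_clm _).norm_lt_of_forall_hasEigenvalue hS hc fun μ hμ => ?_
  by_contra! hcμ
  obtain ⟨v, hv⟩ := hμ.exists_hasEigenvector
  have hSv : T (v - P v) = μ • v := hv.apply_eq_smul
  -- `P` kills the range of `T (1 - P)`, hence every eigenvector with a nonzero eigenvalue.
  have hPv : P v = 0 := by
    have hμ0 : μ ≠ 0 := norm_pos_iff.mp (hc.trans_le hcμ)
    have : μ • P v = T (P (v - P v)) := by
      rw [← map_smul, ← hSv]
      exact congr($(hTP.eq.symm) (v - P v))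
    rw [map_sub, W.starProjection_eq_self_iff.mpr (W.starProjection_apply_mem v), sub_self,
      map_zero] at this
    exact (smul_eq_zero.mp this).resolve_left hμ0
  rw [hPv, sub_zero] at hSv
  have hvW : v ∈ W := hTW <| le_iSup (fun μ : {μ : 𝕜 // c ≤ ‖μ‖} => eigenspace (T : End 𝕜 E) μ)
    ⟨μ, hcμ⟩ (mem_eigenspace_iff.mpr hSv)
  exact hv.2 (by rw [← W.starProjection_eq_self_iff.mpr hvW, hPv])

theorem IsCompactOperator.exists_finiteDimensional_norm_comp_one_sub_starProjection_lt
    (hT : IsCompactOperator T) (hT' : IsSelfAdjoint T) {ε : ℝ} (hε : 0 < ε) :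
    ∃ (W : Submodule 𝕜 E) (_ : FiniteDimensional 𝕜 W),
      Commute T W.starProjection ∧ ‖T ∘L (1 - W.starProjection)‖ < ε := by
  have hW := spectralSubspace_mem_invtSubmodule (T : End 𝕜 E) ε
  have := hT.finiteDimensional_spectralSubspace hT' hε
  exact ⟨_, this, hT'.commute_starProjection hW,
    hT.norm_comp_one_sub_starProjection_lt hT' hε hW le_rfl⟩

end InnerProductSpace

theorem stmt_8_general {H : Type*} [NormedAddCommGroup H] [InnerProductSpace ℂ H] [CompleteSpace H]
    (h : H →L[ℂ] H) (hcomp : IsCompactOperator h) (hsa : IsSelfAdjoint h) :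
    let U : Set (H →L[ℂ] H) := {k | IsSelfAdjoint k ∧ IsCompactOperator k ∧
      (∃ b : H →L[ℂ] H, ‖b‖ ≤ 1 ∧ k = h ∘L b) ∧ (∃ c : H →L[ℂ] H, k = c ∘L h)}
    (∀ ε : ℝ, 0 < ε → ∃ E : H →L[ℂ] H, IsIdempotentElem E ∧ IsSelfAdjoint E ∧
      FiniteDimensional ℂ (LinearMap.range (E : H →ₗ[ℂ] H)) ∧ Commute h E ∧
      ‖h ∘L (1 - E)‖ < ε ∧
      ∀ k ∈ U, ‖k ∘L (1 - E)‖ ≤ ε ∧ ‖(1 - E) ∘L k‖ ≤ ε) ∧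
    TotallyBounded U := by
  intro U
  have hspectral : ∀ ε > 0, ∃ (W : Submodule ℂ H) (_ : FiniteDimensional ℂ W),
      Commute h W.starProjection ∧ ‖h ∘L (1 - W.starProjection)‖ < ε ∧
      ∀ k ∈ U, ‖k ∘L (1 - W.starProjection)‖ < ε ∧ ‖(1 - W.starProjection) ∘L k‖ < ε := by
    intro ε hε
    obtain ⟨W, hW, hcomm, hlt⟩ :=
      hcomp.exists_finiteDimensional_norm_comp_one_sub_starProjection_lt hsa hε
    refine ⟨W, hW, hcomm, hlt, ?_⟩
    rintro k ⟨hk, -, ⟨b, hb, hkb⟩, -⟩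
    obtain ⟨hkP, hPk⟩ := ((IsSelfAdjoint.one _).sub (isSelfAdjoint_starProjection W))
      |>.norm_mul_le_of_commute hk ((Commute.one_right h).sub_right hcomm) hkb hb
    exact ⟨hkP.trans_lt hlt, hPk.trans_lt hlt⟩
  refine ⟨fun ε hε => ?_, ?_⟩
  · obtain ⟨W, _, hcomm, hlt, hU⟩ := hspectral ε hε
    refine ⟨W.starProjection, W.isIdempotentElem_starProjection, isSelfAdjoint_starProjection W,
      ?_, hcomm, hlt, fun k hk => ⟨(hU k hk).1.le, (hU k hk).2.le⟩⟩
    rwa [W.range_starProjection]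
  · refine totallyBounded_of_forall_subset_thickening fun δ hδ => ?_
    obtain ⟨W, _, -, -, hU⟩ := hspectral (δ / 2) (by positivity)
    refine ⟨_, W.totallyBounded_image_starProjection_mul_mul ‖h‖, fun k hk =>
      mem_thickening_iff.mpr ⟨_, ⟨k, ?_, rfl⟩, ?_⟩⟩
    · obtain ⟨-, -, ⟨b, hb, rfl⟩, -⟩ := hk
      rw [mem_closedBall_zero_iff]
      exact (h.opNorm_comp_le b).trans (mul_le_of_le_one_right (norm_nonneg h) hb)
    · obtain ⟨hkP, hPk⟩ := hU k hk
      calc dist k (W.starProjection * k * W.starProjection)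
          = ‖k - W.starProjection * k * W.starProjection‖ := dist_eq_norm _ _
        _ ≤ ‖k * (1 - W.starProjection)‖ + ‖(1 - W.starProjection) * k‖ :=
          norm_sub_mul_mul_le W.starProjection_norm_le
        _ < δ / 2 + δ / 2 := add_lt_add hkP hPk
        _ = δ := add_halves δ

/-- For U° = {k compact self-adjoint : k = h·b with ‖b‖ ≤ 1 (i.e. Dk bounded, ‖Dk‖ ≤ 1)
and kD bounded}, every ε > 0 admits a finite-rank spectral projection E of h with
‖h(I−E)‖ < ε and ‖k(I−E)‖, ‖(I−E)k‖ ≤ ε for all k ∈ U°; consequently U° is totally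
bounded, hence relatively norm compact. -/
theorem stmt_8 {H : Type*} [NormedAddCommGroup H] [InnerProductSpace ℂ H] [CompleteSpace H]
    (h : H →L[ℂ] H) (hcomp : IsCompactOperator h) (hsa : IsSelfAdjoint h)
    (hinj : Function.Injective h) :
    let U : Set (H →L[ℂ] H) := {k | IsSelfAdjoint k ∧ IsCompactOperator k ∧
      (∃ b : H →L[ℂ] H, ‖b‖ ≤ 1 ∧ k = h ∘L b) ∧ (∃ c : H →L[ℂ] H, k = c ∘L h)}
    (∀ ε : ℝ, 0 < ε → ∃ E : H →L[ℂ] H, IsIdempotentElem E ∧ IsSelfAdjoint E ∧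
      FiniteDimensional ℂ (LinearMap.range (E : H →ₗ[ℂ] H)) ∧ Commute h E ∧
      ‖h ∘L (1 - E)‖ < ε ∧
      ∀ k ∈ U, ‖k ∘L (1 - E)‖ ≤ ε ∧ ‖(1 - E) ∘L k‖ ≤ ε) ∧
    TotallyBounded U :=
  stmt_8_general h hcomp hsa
end

section
/- Let M(α,β) = [[0,β],[β,1/α]] with α, β > 0, let (λᵢ) be the nonzero eigenvalues (with multiplicity) of a self-adjoint operator D_p with compact inverse, and (μⱼ) those of D_q. For s > 0, the eigenvalues of the 3×3-block operator D_{α,β} (with blocks [[0, βD_p, 0],[βD_p, D_p/α, 0],[0,0,D_q/α]]) satisfy Tr(|D_{α,β}|^{−s}) = Tr(|M(α,β)|^{−s})·Tr(|D_p|^{−s}) + α^s·Tr(|D_q|^{−s}), where each side may be +∞. In particular D_{α,β} is s-summable iff both D_p and D_q are. -/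
open scoped ENNReal

lemma ENNReal.ofReal_abs_mul_rpow (x y r : ℝ) :
    ENNReal.ofReal (|x * y| ^ r) = ENNReal.ofReal (|x| ^ r) * ENNReal.ofReal (|y| ^ r) := by
  rw [abs_mul, Real.mul_rpow (abs_nonneg x) (abs_nonneg y),
    ENNReal.ofReal_mul (Real.rpow_nonneg (abs_nonneg x) _)]

lemma ENNReal.ofReal_abs_div_rpow_neg {a : ℝ} (ha : 0 < a) (x s : ℝ) :
    ENNReal.ofReal (|x / a| ^ (-s)) = ENNReal.ofReal (a ^ s) * ENNReal.ofReal (|x| ^ (-s)) := by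
  rw [div_eq_mul_inv, ENNReal.ofReal_abs_mul_rpow, abs_inv, abs_of_pos ha,
    Real.inv_rpow ha.le, ← Real.rpow_neg ha.le, neg_neg, mul_comm]

lemma ENNReal.tsum_mul_add_mul {ι : Type*} (f : ι → ℝ≥0∞) (a b : ℝ≥0∞) :
    ∑' i, (f i * a + f i * b) = (a + b) * ∑' i, f i := by
  simp_rw [← mul_add, ENNReal.tsum_mul_right, mul_comm]

lemma ENNReal.mul_add_mul_ne_top_iff {a b x y : ℝ≥0∞} (ha₀ : a ≠ 0) (ha : a ≠ ∞)
    (hb₀ : b ≠ 0) (hb : b ≠ ∞) : a * x + b * y ≠ ∞ ↔ x ≠ ∞ ∧ y ≠ ∞ := by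
  simp [ENNReal.add_eq_top, ENNReal.mul_eq_top, ha₀, ha, hb₀, hb]

theorem stmt_9_general (α β s : ℝ) (hα : 0 < α)
    {ι κ : Type*} (lam : ι → ℝ) (mu : κ → ℝ) :
    let ep : ℝ := (1 + Real.sqrt (1 + 4*α^2*β^2)) / (2*α)
    let em : ℝ := (1 - Real.sqrt (1 + 4*α^2*β^2)) / (2*α)
    ((∑' i : ι, (ENNReal.ofReal (|lam i * ep| ^ (-s)) + ENNReal.ofReal (|lam i * em| ^ (-s))))
        + ∑' j : κ, ENNReal.ofReal (|mu j / α| ^ (-s))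
      = (ENNReal.ofReal (|ep| ^ (-s)) + ENNReal.ofReal (|em| ^ (-s))) *
          (∑' i : ι, ENNReal.ofReal (|lam i| ^ (-s)))
        + ENNReal.ofReal (α ^ s) * (∑' j : κ, ENNReal.ofReal (|mu j| ^ (-s)))) ∧
    ((∑' i : ι, (ENNReal.ofReal (|lam i * ep| ^ (-s)) + ENNReal.ofReal (|lam i * em| ^ (-s))))
        + ∑' j : κ, ENNReal.ofReal (|mu j / α| ^ (-s)) ≠ ⊤ ↔
      ((∑' i : ι, ENNReal.ofReal (|lam i| ^ (-s))) ≠ ⊤ ∧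
        (∑' j : κ, ENNReal.ofReal (|mu j| ^ (-s))) ≠ ⊤)) := by
  intro ep em
  have hep : 0 < ep := by unfold ep; positivity
  have htrace : (∑' i, (ENNReal.ofReal (|lam i * ep| ^ (-s)) + ENNReal.ofReal (|lam i * em| ^ (-s))))
        + ∑' j, ENNReal.ofReal (|mu j / α| ^ (-s))
      = (ENNReal.ofReal (|ep| ^ (-s)) + ENNReal.ofReal (|em| ^ (-s))) *
          (∑' i, ENNReal.ofReal (|lam i| ^ (-s)))
        + ENNReal.ofReal (α ^ s) * (∑' j, ENNReal.ofReal (|mu j| ^ (-s))) := by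
    simp_rw [ENNReal.ofReal_abs_mul_rpow, ENNReal.tsum_mul_add_mul,
      ENNReal.ofReal_abs_div_rpow_neg hα, ENNReal.tsum_mul_left]
  refine ⟨htrace, ?_⟩
  rw [htrace]
  have hep_pos : ENNReal.ofReal (|ep| ^ (-s)) ≠ 0 :=
    (ENNReal.ofReal_pos.mpr (Real.rpow_pos_of_pos (abs_pos.mpr hep.ne') _)).ne'
  exact ENNReal.mul_add_mul_ne_top_iff (by simp [hep_pos]) (by simp [ENNReal.add_eq_top])
    (ENNReal.ofReal_pos.mpr (Real.rpow_pos_of_pos hα s)).ne' ENNReal.ofReal_ne_top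

/-- Trace identity Tr(|D_{α,β}|^{−s}) = Tr(|M(α,β)|^{−s})·Tr(|D_p|^{−s}) + αˢ·Tr(|D_q|^{−s}),
expressed via the eigenvalue sequences (λᵢ) of D_p, (μⱼ) of D_q and the eigenvalues
λ± of M(α,β); in particular finiteness holds iff both D_p and D_q are s-summable. -/
theorem stmt_9 (α β s : ℝ) (hα : 0 < α) (hβ : 0 < β) (hs : 0 < s)
    {ι κ : Type*} (lam : ι → ℝ) (mu : κ → ℝ)
    (hlam : ∀ i, lam i ≠ 0) (hmu : ∀ j, mu j ≠ 0) :
    let ep : ℝ := (1 + Real.sqrt (1 + 4*α^2*β^2)) / (2*α)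
    let em : ℝ := (1 - Real.sqrt (1 + 4*α^2*β^2)) / (2*α)
    ((∑' i : ι, (ENNReal.ofReal (|lam i * ep| ^ (-s)) + ENNReal.ofReal (|lam i * em| ^ (-s))))
        + ∑' j : κ, ENNReal.ofReal (|mu j / α| ^ (-s))
      = (ENNReal.ofReal (|ep| ^ (-s)) + ENNReal.ofReal (|em| ^ (-s))) *
          (∑' i : ι, ENNReal.ofReal (|lam i| ^ (-s)))
        + ENNReal.ofReal (α ^ s) * (∑' j : κ, ENNReal.ofReal (|mu j| ^ (-s)))) ∧
    ((∑' i : ι, (ENNReal.ofReal (|lam i * ep| ^ (-s)) + ENNReal.ofReal (|lam i * em| ^ (-s))))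
        + ∑' j : κ, ENNReal.ofReal (|mu j / α| ^ (-s)) ≠ ⊤ ↔
      ((∑' i : ι, ENNReal.ofReal (|lam i| ^ (-s))) ≠ ⊤ ∧
        (∑' j : κ, ENNReal.ofReal (|mu j| ^ (-s))) ≠ ⊤)) :=
  stmt_9_general α β s hα lam mu
end

section
/- In the setting of the bridge seminorm L(a,b) = max{L₃(a), L₂(b), R·L₃(a−b), R·L₂(a−b), M·|σ(a−b)|} with s·L₂ ≤ L₁ ≤ r·L₂, L₃ = (1/√(rs))L₁, and R = √s/(√r − √s) (0 < s < r): for every a with L₃(a) ≤ 1, the element b := √(s/r)·a + (1 − √(s/r))·σ(a)·e satisfies L(a,b) ≤ 1. Hence the quotient of L to the first summand equals L₃, i.e. inf{L(a,b) : b ∈ V} = L₃(a) for all a. -/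
/-!
Put t = √(s/r) and b = t·a + (1 − t)·σ(a)·e. Since L₁ and L₂ vanish on e, L₂(b) = t·L₂(a), and
a − b = (1 − t)·(a − σ(a)·e) gives L_i(a − b) = (1 − t)·L_i(a) and σ(a − b) = 0. The constant R
is exactly the one with R·(1 − t) = t, and t·L₂ ≤ L₃ is the bound s·L₂ ≤ L₁ rescaled, so every
term of L(a, b) is at most L₃(a). As L(a, ·) ≥ L₃(a) anyway, the infimum is attained at b.
-/

namespace Seminorm

variable {V : Type*} [AddCommGroup V] [Module ℝ V] (p : Seminorm ℝ V) {e : V}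

lemma map_add_smul_of_map_eq_zero (he : p e = 0) (a : V) (c : ℝ) : p (a + c • e) = p a := by
  have h := abs_sub_map_le_sub p (a + c • e) a
  rwa [add_sub_cancel_left, map_smul_eq_mul, he, mul_zero, abs_nonpos_iff, sub_eq_zero] at h

end Seminorm

section BridgePoint

variable {V : Type*} [AddCommGroup V] [Module ℝ V] (e : V) (σ : V →ₗ[ℝ] ℝ) (t : ℝ) (a : V)

def bridgePoint : V := t • a + ((1 - t) * σ a) • e

lemma sub_bridgePoint : a - bridgePoint e σ t a = (1 - t) • (a - σ a • e) := by
  unfold bridgePoint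
  module

lemma map_sub_bridgePoint_eq_zero (hσ : σ e = 1) : σ (a - bridgePoint e σ t a) = 0 := by
  simp [sub_bridgePoint, hσ]

variable {e} (p : Seminorm ℝ V)

lemma Seminorm.map_bridgePoint (hp : p e = 0) (ht : 0 ≤ t) :
    p (bridgePoint e σ t a) = t * p a := by
  rw [bridgePoint, p.map_add_smul_of_map_eq_zero hp, map_smul_eq_mul, Real.norm_of_nonneg ht]

lemma Seminorm.map_sub_bridgePoint (hp : p e = 0) (ht : t ≤ 1) :
    p (a - bridgePoint e σ t a) = (1 - t) * p a := by
  rw [sub_bridgePoint, map_smul_eq_mul, Real.norm_of_nonneg (sub_nonneg.2 ht), sub_eq_add_neg a,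
    ← neg_smul, p.map_add_smul_of_map_eq_zero hp]

end BridgePoint

lemma Real.sqrt_div_eq_div_sqrt_mul {s r : ℝ} (hs : 0 ≤ s) (hr : 0 < r) :
    √(s / r) = s / √(r * s) := by
  rcases hs.eq_or_lt with rfl | hs
  · simp
  rw [Real.sqrt_div hs.le, Real.sqrt_mul hr.le, div_eq_div_iff (by positivity) (by positivity),
    mul_left_comm, Real.mul_self_sqrt hs.le, mul_comm]

lemma Real.sqrt_div_sub_sqrt_mul_one_sub_sqrt_div {s r : ℝ} (hs : 0 ≤ s) (hr : 0 < r)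
    (hsr : s ≠ r) : √s / (√r - √s) * (1 - √(s / r)) = √(s / r) := by
  have hsr' : √r - √s ≠ 0 := sub_ne_zero.2 fun h => hsr ((Real.sqrt_inj hs hr.le).1 h.symm)
  have hr' : √r ≠ 0 := (Real.sqrt_pos.2 hr).ne'
  rw [Real.sqrt_div hs]
  field_simp

theorem stmt_12_general {V : Type*} [AddCommGroup V] [Module ℝ V]
    (e : V) (L₁ L₂ : Seminorm ℝ V)
    (h1 : ∀ a, L₁ a = 0 ↔ ∃ c : ℝ, a = c • e)
    (h2 : ∀ a, L₂ a = 0 ↔ ∃ c : ℝ, a = c • e)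
    (σ : V →ₗ[ℝ] ℝ) (hσ : σ e = 1)
    (s r : ℝ) (hs : 0 < s) (hsr : s < r)
    (hL : ∀ a, s * L₂ a ≤ L₁ a ∧ L₁ a ≤ r * L₂ a)
    (M : ℝ) :
    let L₃ : V → ℝ := fun a => (1 / Real.sqrt (r * s)) * L₁ a
    let R : ℝ := Real.sqrt s / (Real.sqrt r - Real.sqrt s)
    let L : V × V → ℝ := fun p =>
      max (max (max (L₃ p.1) (L₂ p.2)) (max (R * L₃ (p.1 - p.2)) (R * L₂ (p.1 - p.2))))
        (M * |σ (p.1 - p.2)|)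
    (∀ a : V, L₃ a ≤ 1 →
      L (a, Real.sqrt (s/r) • a + ((1 - Real.sqrt (s/r)) * σ a) • e) ≤ 1) ∧
    (∀ a : V, IsGLB {x : ℝ | ∃ b : V, x = L (a, b)} (L₃ a)) := by
  intro L₃ R L
  have hr : 0 < r := hs.trans hsr
  have hL₁e : L₁ e = 0 := (h1 e).2 ⟨1, (one_smul ℝ e).symm⟩
  have hL₂e : L₂ e = 0 := (h2 e).2 ⟨1, (one_smul ℝ e).symm⟩
  have hL₃_nonneg (a : V) : 0 ≤ L₃ a := mul_nonneg (by positivity) (apply_nonneg L₁ a)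
  have hRt : R * (1 - √(s / r)) = √(s / r) :=
    Real.sqrt_div_sub_sqrt_mul_one_sub_sqrt_div hs.le hr hsr.ne
  set t := √(s / r) with ht
  have ht0 : 0 ≤ t := Real.sqrt_nonneg _
  have ht1 : t ≤ 1 := Real.sqrt_le_one.2 ((div_le_one hr).2 hsr.le)
  have hL₂_le (a : V) : t * L₂ a ≤ L₃ a := by
    calc t * L₂ a = 1 / √(r * s) * (s * L₂ a) := by
          rw [ht, Real.sqrt_div_eq_div_sqrt_mul hs.le hr]
          ring
      _ ≤ L₃ a := mul_le_mul_of_nonneg_left (hL a).1 (by positivity)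
  have hbridge (a : V) : L (a, bridgePoint e σ t a) ≤ L₃ a := by
    have hL₃_sub : L₃ (a - bridgePoint e σ t a) = (1 - t) * L₃ a := by
      simp only [L₃, L₁.map_sub_bridgePoint σ t a hL₁e ht1]
      ring
    refine max_le (max_le (max_le le_rfl ?_) (max_le ?_ ?_)) ?_
    · rw [L₂.map_bridgePoint σ t a hL₂e ht0]
      exact hL₂_le a
    · rw [hL₃_sub, ← mul_assoc, hRt]
      exact mul_le_of_le_one_left (hL₃_nonneg a) ht1
    · rw [L₂.map_sub_bridgePoint σ t a hL₂e ht1, ← mul_assoc, hRt]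
      exact hL₂_le a
    · rw [map_sub_bridgePoint_eq_zero e σ t a hσ, abs_zero, mul_zero]
      exact hL₃_nonneg a
  have hle (a b : V) : L₃ a ≤ L (a, b) :=
    le_max_of_le_left (le_max_of_le_left (le_max_left _ _))
  refine ⟨fun a ha => (hbridge a).trans ha, fun a => IsLeast.isGLB ⟨?_, ?_⟩⟩
  · exact ⟨bridgePoint e σ t a, (hle a _).antisymm (hbridge a)⟩
  · rintro x ⟨b, rfl⟩
    exact hle a b

/-- In the bridge construction with s·L₂ ≤ L₁ ≤ r·L₂, L₃ = (1/√(rs))·L₁ and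
R = √s/(√r−√s): for L₃(a) ≤ 1 the element b = √(s/r)·a + (1−√(s/r))·σ(a)·e satisfies
L(a,b) ≤ 1; hence the quotient of L to the first summand equals L₃, i.e.
inf{L(a,b) : b ∈ V} = L₃(a). -/
theorem stmt_12 {V : Type*} [AddCommGroup V] [Module ℝ V]
    (e : V) (he : e ≠ 0) (L₁ L₂ : Seminorm ℝ V)
    (h1 : ∀ a, L₁ a = 0 ↔ ∃ c : ℝ, a = c • e)
    (h2 : ∀ a, L₂ a = 0 ↔ ∃ c : ℝ, a = c • e)
    (σ : V →ₗ[ℝ] ℝ) (hσ : σ e = 1)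
    (s r : ℝ) (hs : 0 < s) (hsr : s < r)
    (hL : ∀ a, s * L₂ a ≤ L₁ a ∧ L₁ a ≤ r * L₂ a)
    (M : ℝ) (hM : 0 < M) :
    let L₃ : V → ℝ := fun a => (1 / Real.sqrt (r * s)) * L₁ a
    let R : ℝ := Real.sqrt s / (Real.sqrt r - Real.sqrt s)
    let L : V × V → ℝ := fun p =>
      max (max (max (L₃ p.1) (L₂ p.2)) (max (R * L₃ (p.1 - p.2)) (R * L₂ (p.1 - p.2))))
        (M * |σ (p.1 - p.2)|)
    (∀ a : V, L₃ a ≤ 1 →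
      L (a, Real.sqrt (s/r) • a + ((1 - Real.sqrt (s/r)) * σ a) • e) ≤ 1) ∧
    (∀ a : V, IsGLB {x : ℝ | ∃ b : V, x = L (a, b)} (L₃ a)) :=
  stmt_12_general e L₁ L₂ h1 h2 σ hσ s r hs hsr hL M
end
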